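/- Let H^ext_{n+1} (n ≥ 2) be the extended half-grid with leaves x_1,…,x_{n+1} and root ρ = (1,n). Then H^ext_{n+1} is a median graph, and for all leaves x_i and x_j with i < j one has med(ρ, x_i, x_j) = (i, j−1). -/

import Mathlib

/-- `m` is a median of the triple `u, v, w` in `G`. -/
def IsMedianVtx {V : Type*} (G : SimpleGraph V) (u v w m : V) : Prop :=
  G.dist u m + G.dist m v = G.dist u v ∧
  G.dist v m + G.dist m w = G.dist v w ∧
  G.dist u m + G.dist m w = G.dist u w

/-- A median graph: a connected graph in which every triple of vertices has a
unique median. -/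
def IsMedianGraph {V : Type*} (G : SimpleGraph V) : Prop :=
  G.Connected ∧ ∀ u v w : V, ∃! m : V, IsMedianVtx G u v w m

/-- Adjacency of the infinite grid on `ℕ × ℕ`: two pairs are adjacent iff they agree
in one coordinate and differ by exactly one in the other (this is the adjacency of a
Cartesian product of paths). -/
def gridAdj (p q : ℕ × ℕ) : Prop :=
  (p.1 = q.1 ∧ (p.2 + 1 = q.2 ∨ q.2 + 1 = p.2)) ∨
  (p.2 = q.2 ∧ (p.1 + 1 = q.1 ∨ q.1 + 1 = p.1))

/-- The grid graph on `ℕ × ℕ`. -/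
def gridGraph : SimpleGraph (ℕ × ℕ) where
  Adj := gridAdj
  symm := by
    constructor
    intro p q h
    simp only [gridAdj] at h ⊢
    omega
  loopless := by
    constructor
    intro p h
    simp only [gridAdj] at h
    omega

/-- The vertex set `{1, …, n} × {1, …, n}` of `P_n □ P_n` (1-indexed). -/
def gridVert (n : ℕ) : Set (ℕ × ℕ) := {p | 1 ≤ p.1 ∧ p.1 ≤ n ∧ 1 ≤ p.2 ∧ p.2 ≤ n}

/-- The vertex set of the half-grid `H_n`: the vertices `(i,j)` of `P_n □ P_n` with
either `i = 1` and `1 ≤ j ≤ n`, or `2 ≤ i ≤ n` and `i - 1 ≤ j ≤ n`; equivalently,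
the vertices with `i ≤ j + 1`. -/
def halfVert (n : ℕ) : Set (ℕ × ℕ) := {p | p ∈ gridVert n ∧ p.1 ≤ p.2 + 1}

/-- The full grid `P_n □ P_n` (1-indexed), as an induced subgraph of `gridGraph`. -/
def fullGrid (n : ℕ) : SimpleGraph (gridVert n) := gridGraph.induce (gridVert n)

/-- The half-grid `H_n`, the subgraph of `P_n □ P_n` induced by `halfVert n`. -/
def halfGrid (n : ℕ) : SimpleGraph (halfVert n) := gridGraph.induce (halfVert n)

/-- The distinguished vertices `v_1 = (1,1)`, `v_{n+1} = (n,n)` and `v_ℓ = (ℓ, ℓ-1)`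
for `2 ≤ ℓ ≤ n` of the half-grid `H_n`: `x_ℓ` is leaf-appended to `v_ℓ`. -/
def hgVert (n ℓ : ℕ) : ℕ × ℕ :=
  if ℓ = n + 1 then (n, n) else if ℓ = 1 then (1, 1) else (ℓ, ℓ - 1)

/-- Indices `1 ≤ ℓ ≤ n+1` of the leaves `x_1, …, x_{n+1}` of the extended half-grid. -/
abbrev leafIdx (n : ℕ) : Type := {ℓ : ℕ // 1 ≤ ℓ ∧ ℓ ≤ n + 1}

/-- The extended half-grid `H^ext_{n+1}`: the half-grid `H_n` together with `n+1`
leaves `x_1, …, x_{n+1}` (encoded as `Sum.inr ℓ`), where `x_1` is adjacent exactly to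
`(1,1)`, `x_{n+1}` to `(n,n)`, and `x_ℓ` to `(ℓ, ℓ-1)` for `2 ≤ ℓ ≤ n`. -/
def extHalfGrid (n : ℕ) : SimpleGraph (↥(halfVert n) ⊕ leafIdx n) where
  Adj x y :=
    match x, y with
    | Sum.inl a, Sum.inl b => gridAdj a.val b.val
    | Sum.inl a, Sum.inr ℓ => a.val = hgVert n ℓ.val
    | Sum.inr ℓ, Sum.inl a => a.val = hgVert n ℓ.val
    | Sum.inr _, Sum.inr _ => False
  symm := by
    constructor
    rintro (a | i) (b | j) h
    · show gridAdj b.val a.val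
      have h' : gridAdj a.val b.val := h
      simp only [gridAdj] at h' ⊢
      omega
    · exact h
    · exact h
    · exact h
  loopless := by
    constructor
    rintro (a | i) h
    · have h' : gridAdj a.val a.val := h
      simp only [gridAdj] at h'
      omega
    · exact h


/-!
Every vertex of `H^ext_{n+1}` sits over a vertex of the half-grid (a leaf over the vertex it
hangs from). The half-grid is a staircase region of the grid, so any vertex can take a step
towards any other without leaving it; hence graph distance is the `ℓ¹` distance of the
underlying grid vertices plus one for each leaf involved. A leaf is never between two other
vertices, so the median of three distinct vertices is a half-grid vertex whose coordinates are
the coordinatewise medians; the staircase is closed under coordinatewise medians, which gives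
existence. For `ρ = (1,n)`, `x_i`, `x_j` the coordinatewise median is `(i, j-1)`.
-/

open SimpleGraph

namespace SimpleGraph

variable {V : Type*} {G : SimpleGraph V} {u v w m : V}

lemma isMedianVtx_comm_left : IsMedianVtx G u v w m ↔ IsMedianVtx G v u w m := by
  have := G.dist_comm (u := u) (v := v)
  have := G.dist_comm (u := m) (v := u)
  have := G.dist_comm (u := m) (v := v)
  unfold IsMedianVtx
  omega

lemma isMedianVtx_comm_right : IsMedianVtx G u v w m ↔ IsMedianVtx G u w v m := by
  have := G.dist_comm (u := v) (v := w)
  have := G.dist_comm (u := m) (v := v)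
  have := G.dist_comm (u := m) (v := w)
  unfold IsMedianVtx
  omega

lemma Connected.existsUnique_isMedianVtx_self_left (hG : G.Connected) (u w : V) :
    ∃! m, IsMedianVtx G u u w m := by
  refine ⟨u, by simp [IsMedianVtx], fun m hm => ?_⟩
  have h := hm.1
  rw [dist_self] at h
  exact (hG.dist_eq_zero_iff.mp (by omega)).symm

variable {d : V → V → ℕ}

lemma le_length_of_forall_adj (h_self : ∀ v, d v v = 0)
    (h_adj : ∀ u w v, G.Adj u w → d u v ≤ d w v + 1) {u v : V} (p : G.Walk u v) :
    d u v ≤ p.length := by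
  induction p with
  | nil => simp [h_self]
  | cons h _ ih => rw [Walk.length_cons]; exact (h_adj _ _ _ h).trans (by omega)

lemma exists_walk_length_le_of_forall_step
    (h_step : ∀ u v, u ≠ v → ∃ w, G.Adj u w ∧ d w v < d u v) (u v : V) :
    ∃ p : G.Walk u v, p.length ≤ d u v := by
  induction hk : d u v using Nat.strong_induction_on generalizing u with
  | _ k ih =>
    by_cases huv : u = v
    · subst huv
      exact ⟨Walk.nil, by simp⟩
    obtain ⟨w, hadj, hlt⟩ := h_step u v huv
    obtain ⟨p, hp⟩ := ih _ (hk ▸ hlt) w rfl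
    exact ⟨Walk.cons hadj p, by rw [Walk.length_cons]; omega⟩

lemma dist_eq_of_forall_step (h_self : ∀ v, d v v = 0)
    (h_adj : ∀ u w v, G.Adj u w → d u v ≤ d w v + 1)
    (h_step : ∀ u v, u ≠ v → ∃ w, G.Adj u w ∧ d w v < d u v) (u v : V) :
    G.dist u v = d u v := by
  obtain ⟨p, hp⟩ := exists_walk_length_le_of_forall_step h_step u v
  obtain ⟨q, hq⟩ := p.reachable.exists_walk_length_eq_dist
  exact le_antisymm ((dist_le p).trans hp) (hq ▸ le_length_of_forall_adj h_self h_adj q)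

end SimpleGraph

def med3 (x y z : ℕ) : ℕ := max (min x y) (min (max x y) z)

lemma med3_spec (x y z m : ℕ) :
    (x.dist m + m.dist y = x.dist y ∧ y.dist m + m.dist z = y.dist z ∧
      x.dist m + m.dist z = x.dist z) ↔ m = med3 x y z := by
  simp only [Nat.dist, med3]
  omega

def l1Dist (a b : ℕ × ℕ) : ℕ := a.1.dist b.1 + a.2.dist b.2

def l1Median (a b c : ℕ × ℕ) : ℕ × ℕ := (med3 a.1 b.1 c.1, med3 a.2 b.2 c.2)

lemma l1Dist_self (a : ℕ × ℕ) : l1Dist a a = 0 := by simp [l1Dist]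

lemma l1Dist_pos {a b : ℕ × ℕ} (h : a ≠ b) : 0 < l1Dist a b := by
  obtain ⟨a1, a2⟩ := a
  obtain ⟨b1, b2⟩ := b
  simp only [ne_eq, Prod.mk.injEq] at h
  simp only [l1Dist, Nat.dist]
  omega

lemma l1Dist_triangle (a b c : ℕ × ℕ) : l1Dist a c ≤ l1Dist a b + l1Dist b c := by
  simp only [l1Dist, Nat.dist]
  omega

lemma l1Dist_add_l1Dist_eq_iff (a m b : ℕ × ℕ) :
    l1Dist a m + l1Dist m b = l1Dist a b ↔
      a.1.dist m.1 + m.1.dist b.1 = a.1.dist b.1 ∧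
        a.2.dist m.2 + m.2.dist b.2 = a.2.dist b.2 := by
  simp only [l1Dist, Nat.dist]
  omega

lemma l1Median_spec (a b c m : ℕ × ℕ) :
    (l1Dist a m + l1Dist m b = l1Dist a b ∧ l1Dist b m + l1Dist m c = l1Dist b c ∧
      l1Dist a m + l1Dist m c = l1Dist a c) ↔ m = l1Median a b c := by
  simp only [l1Dist_add_l1Dist_eq_iff, l1Median, Prod.ext_iff, ← med3_spec]
  tauto

section HalfGrid

variable {n : ℕ} {a b c : ℕ × ℕ}

lemma l1Median_mem_halfVert (ha : a ∈ halfVert n) (hb : b ∈ halfVert n)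
    (hc : c ∈ halfVert n) :
    l1Median a b c ∈ halfVert n := by
  simp only [halfVert, gridVert, Set.mem_ofPred_eq, l1Median, med3] at *
  omega

lemma exists_gridAdj_l1Dist_lt (ha : a ∈ halfVert n) (hb : b ∈ halfVert n) (hab : a ≠ b) :
    ∃ a' ∈ halfVert n, gridAdj a a' ∧ l1Dist a' b < l1Dist a b := by
  obtain ⟨a1, a2⟩ := a
  obtain ⟨b1, b2⟩ := b
  simp only [halfVert, gridVert, Set.mem_ofPred_eq] at ha hb
  simp only [ne_eq, Prod.mk.injEq] at hab
  simp only [halfVert, gridVert, Set.mem_ofPred_eq, gridAdj, l1Dist, Nat.dist]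
  -- the order of the four moves matters: each case keeps `i ≤ j + 1`
  by_cases h1 : b1 < a1
  · exact ⟨(a1 - 1, a2), by omega⟩
  by_cases h2 : a2 < b2
  · exact ⟨(a1, a2 + 1), by omega⟩
  by_cases h3 : b2 < a2
  · exact ⟨(a1, a2 - 1), by omega⟩
  · exact ⟨(a1 + 1, a2), by omega⟩

end HalfGrid

namespace ExtHalfGrid

variable {n : ℕ}

abbrev Vert (n : ℕ) : Type := ↥(halfVert n) ⊕ leafIdx n

def anchor : Vert n → ℕ × ℕ
  | .inl a => a
  | .inr ℓ => hgVert n ℓ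

def leafInd : Vert n → ℕ
  | .inl _ => 0
  | .inr _ => 1

def extDist (u v : Vert n) : ℕ :=
  if u = v then 0 else l1Dist (anchor u) (anchor v) + leafInd u + leafInd v

lemma anchor_mem (hn : 1 ≤ n) (u : Vert n) : anchor u ∈ halfVert n := by
  rcases u with a | ⟨ℓ, hℓ⟩
  · exact a.2
  · simp only [anchor, hgVert, halfVert, gridVert, Set.mem_ofPred_eq]
    split_ifs <;> simp only <;> omega

lemma extDist_self (u : Vert n) : extDist u u = 0 := if_pos rfl

lemma extDist_of_ne {u v : Vert n} (h : u ≠ v) :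
    extDist u v = l1Dist (anchor u) (anchor v) + leafInd u + leafInd v := if_neg h

lemma extDist_pos {u v : Vert n} (h : u ≠ v) : 0 < extDist u v := by
  rw [extDist_of_ne h]
  rcases u with a | ℓ
  · rcases v with b | k
    · exact Nat.add_pos_left (Nat.add_pos_left (l1Dist_pos fun hab =>
        h (congrArg Sum.inl (Subtype.ext hab))) _) _
    · simp [leafInd]
  · simp [leafInd]

lemma extDist_le (u v : Vert n) :
    extDist u v ≤ l1Dist (anchor u) (anchor v) + leafInd u + leafInd v := by
  unfold extDist
  split_ifs <;> omega

lemma extDist_inl_right (u : Vert n) (A : halfVert n) :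
    extDist u (.inl A) = l1Dist (anchor u) A + leafInd u := by
  unfold extDist
  split_ifs with h
  · simp [h, anchor, leafInd, l1Dist_self]
  · rfl

lemma extDist_inl_left (A : halfVert n) (v : Vert n) :
    extDist (.inl A) v = l1Dist A (anchor v) + leafInd v := by
  unfold extDist
  split_ifs with h
  · simp [← h, anchor, leafInd, l1Dist_self]
  · simp [anchor, leafInd]

lemma extDist_triangle (u v w : Vert n) : extDist u w ≤ extDist u v + extDist v w := by
  have := l1Dist_triangle (anchor u) (anchor v) (anchor w)
  have := l1Dist_self (anchor u)
  have := l1Dist_self (anchor v)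
  unfold extDist
  split_ifs <;> subst_vars <;> first | contradiction | omega

lemma extDist_le_one_of_adj {u v : Vert n} (h : (extHalfGrid n).Adj u v) : extDist u v ≤ 1 := by
  refine (extDist_le u v).trans ?_
  rcases u with a | ℓ <;> rcases v with b | k
  · change gridAdj a.1 b.1 at h
    simp only [gridAdj] at h
    simp only [anchor, leafInd, l1Dist, Nat.dist]
    omega
  · change a.1 = hgVert n k at h
    simp [anchor, leafInd, h, l1Dist_self]
  · change b.1 = hgVert n ℓ at h
    simp [anchor, leafInd, h, l1Dist_self]
  · exact h.elim

lemma exists_adj_extDist_lt (hn : 1 ≤ n) {u v : Vert n} (huv : u ≠ v) :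
    ∃ w, (extHalfGrid n).Adj u w ∧ extDist w v < extDist u v := by
  suffices ∃ w, (extHalfGrid n).Adj u w ∧ (w = v ∨
      l1Dist (anchor w) (anchor v) + leafInd w < l1Dist (anchor u) (anchor v) + leafInd u) by
    obtain ⟨w, hadj, rfl | hlt⟩ := this
    · exact ⟨w, hadj, by rw [extDist_self]; exact extDist_pos huv⟩
    · refine ⟨w, hadj, (extDist_le w v).trans_lt ?_⟩
      rw [extDist_of_ne huv]
      omega
  rcases u with a | ℓ
  · by_cases ha : a.1 = anchor v
    · rcases v with b | k
      · exact absurd (congrArg Sum.inl (Subtype.ext ha)) huv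
      · exact ⟨.inr k, ha, .inl rfl⟩
    · obtain ⟨a', ha', hadj, hlt⟩ := exists_gridAdj_l1Dist_lt a.2 (anchor_mem hn v) ha
      exact ⟨.inl ⟨a', ha'⟩, hadj, .inr (by simpa [anchor, leafInd] using hlt)⟩
  · exact ⟨.inl ⟨anchor (.inr ℓ), anchor_mem hn _⟩, rfl,
      .inr (by simp [anchor, leafInd])⟩

lemma dist_eq_extDist (hn : 1 ≤ n) (u v : Vert n) : (extHalfGrid n).dist u v = extDist u v :=
  dist_eq_of_forall_step extDist_self
    (fun u w v h => (extDist_triangle u w v).trans (by have := extDist_le_one_of_adj h; omega))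
    (fun _ _ => exists_adj_extDist_lt hn) u v

lemma connected (hn : 1 ≤ n) : (extHalfGrid n).Connected := by
  refine (connected_iff _).mpr ⟨fun u v => ?_, ⟨.inr ⟨1, le_rfl, by omega⟩⟩⟩
  obtain ⟨p, -⟩ :=
    exists_walk_length_le_of_forall_step (fun _ _ => exists_adj_extDist_lt hn) u v
  exact p.reachable

lemma leaf_not_between {u v : Vert n} {ℓ : leafIdx n} (hu : u ≠ .inr ℓ)
    (hv : .inr ℓ ≠ v) :
    extDist u (.inr ℓ) + extDist (.inr ℓ) v ≠ extDist u v := by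
  rw [extDist_of_ne hu, extDist_of_ne hv]
  have := l1Dist_triangle (anchor u) (anchor (.inr ℓ)) (anchor v)
  have := extDist_le u v
  have : leafInd (.inr ℓ : Vert n) = 1 := rfl
  omega

lemma isMedianVtx_iff (hn : 1 ≤ n) {u v w m : Vert n} (huv : u ≠ v) (hvw : v ≠ w)
    (huw : u ≠ w) :
    IsMedianVtx (extHalfGrid n) u v w m ↔
      m = .inl ⟨l1Median (anchor u) (anchor v) (anchor w),
        l1Median_mem_halfVert (anchor_mem hn u) (anchor_mem hn v) (anchor_mem hn w)⟩ := by
  simp only [IsMedianVtx, dist_eq_extDist hn]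
  rcases m with A | ℓ
  · simp only [extDist_inl_left, extDist_inl_right, extDist_of_ne huv, extDist_of_ne hvw,
      extDist_of_ne huw, Sum.inl.injEq, Subtype.ext_iff, ← l1Median_spec]
    omega
  · refine iff_of_false (fun ⟨h₁, h₂, h₃⟩ => ?_) Sum.inr_ne_inl
    by_cases hu : u = .inr ℓ
    · subst hu
      exact leaf_not_between (Ne.symm huv) huw h₂
    by_cases hv : v = .inr ℓ
    · subst hv
      exact leaf_not_between hu hvw h₃
    exact leaf_not_between hu (Ne.symm hv) h₁

theorem isMedianGraph (hn : 1 ≤ n) : IsMedianGraph (extHalfGrid n) := by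
  have hG := connected hn
  refine ⟨hG, fun u v w => ?_⟩
  by_cases huv : u = v
  · subst huv
    exact hG.existsUnique_isMedianVtx_self_left u w
  by_cases hvw : v = w
  · subst hvw
    simpa only [isMedianVtx_comm_left, isMedianVtx_comm_right] using
      hG.existsUnique_isMedianVtx_self_left v u
  by_cases huw : u = w
  · subst huw
    simpa only [isMedianVtx_comm_right] using hG.existsUnique_isMedianVtx_self_left u v
  have hmed m := isMedianVtx_iff (m := m) hn huv hvw huw
  exact ⟨_, (hmed _).mpr rfl, fun m => (hmed m).mp⟩

end ExtHalfGrid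

open ExtHalfGrid in
theorem stmt_8_general (n : ℕ) (hρ : ((1, n) : ℕ × ℕ) ∈ halfVert n) :
    IsMedianGraph (extHalfGrid n) ∧
    ∀ i j : leafIdx n, (i : ℕ) < (j : ℕ) →
      ∀ m : ↥(halfVert n) ⊕ leafIdx n,
        IsMedianVtx (extHalfGrid n) (Sum.inl ⟨(1, n), hρ⟩) (Sum.inr i) (Sum.inr j) m →
        ∃ hm : (((i : ℕ), (j : ℕ) - 1) : ℕ × ℕ) ∈ halfVert n,
          m = Sum.inl ⟨((i : ℕ), (j : ℕ) - 1), hm⟩ := by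
  have hn : 1 ≤ n := hρ.1.2.1
  refine ⟨isMedianGraph hn, fun ⟨i, hi⟩ ⟨j, hj⟩ hij m hm => ?_⟩
  have hval : l1Median (1, n) (hgVert n i) (hgVert n j) = (i, j - 1) := by
    simp only [hgVert] at hij ⊢
    split_ifs <;> simp only [l1Median, med3, Prod.mk.injEq] <;> omega
  rw [isMedianVtx_iff hn Sum.inl_ne_inr (by simpa using hij.ne) Sum.inl_ne_inr] at hm
  have hmem :=
    l1Median_mem_halfVert hρ (anchor_mem hn (.inr ⟨i, hi⟩)) (anchor_mem hn (.inr ⟨j, hj⟩))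
  exact ⟨hval ▸ hmem, by simp only [hm, anchor, hval]⟩

/-- For `n ≥ 2`, the extended half-grid `H^ext_{n+1}` with root
`ρ = (1,n)` is a median graph, and for all leaves `x_i, x_j` with `i < j` the median
`med(ρ, x_i, x_j)` is the vertex `(i, j-1)` of the half-grid. -/
theorem stmt_8 (n : ℕ) (hn : 2 ≤ n) (hρ : ((1, n) : ℕ × ℕ) ∈ halfVert n) :
    IsMedianGraph (extHalfGrid n) ∧
    ∀ i j : leafIdx n, (i : ℕ) < (j : ℕ) →
      ∀ m : ↥(halfVert n) ⊕ leafIdx n,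
        IsMedianVtx (extHalfGrid n) (Sum.inl ⟨(1, n), hρ⟩) (Sum.inr i) (Sum.inr j) m →
        ∃ hm : (((i : ℕ), (j : ℕ) - 1) : ℕ × ℕ) ∈ halfVert n,
          m = Sum.inl ⟨((i : ℕ), (j : ℕ) - 1), hm⟩ :=
  stmt_8_general n hρ
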